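/- arXiv:1810.09304 — 2 statements merged into one kernel-verified Lean document; each statement's English description precedes it below -/
import Mathlib

section
/- Let p be a binary predicate, let a, b be distinct constants, let 𝓡 = {p(x,y) → ∃z (p(y,z) ∧ p(z,y))}, and let F = {p(a,b)}. Then every exhaustive SO-chase derivation from F and 𝓡 is infinite; in particular, 𝓡 is not SO-k-bounded for any k ∈ ℕ. -/
/-! # A framework for existential rules and the chase

Terms are constants, ordinary variables, or *nulls* (fresh existential variables).
The null `XTerm.null bodyEnc headEnc z key` is the fresh variable `z_{(R,π)}`
canonically determined by the trigger `(R,π)` (encoded by the rule's body and head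
and by the restriction of `π` to the terms of the body) and by the existential
variable `z` of the head. -/

inductive XTerm : Type
  | const : ℕ → XTerm
  | var : ℕ → XTerm
  | null : List (ℕ × List XTerm) → List (ℕ × List XTerm) → XTerm →
      List (XTerm × XTerm) → XTerm

/-- variables (including nulls) are the non-constant terms -/
def XTerm.isVar : XTerm → Prop
  | .const _ => False
  | _ => True

/-- an atom: a predicate together with its list of arguments -/
structure XAtom where
  pred : ℕ
  args : List XTerm

/-- an existential rule, given by its (finite) body and head -/
structure XRule where
  body : List XAtom
  head : List XAtom

/-- a trigger `(R,π)` -/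
structure Trigger where
  rule : XRule
  π : XTerm → XTerm

def applyAtom (σ : XTerm → XTerm) (a : XAtom) : XAtom := ⟨a.pred, a.args.map σ⟩

def applySet (σ : XTerm → XTerm) (S : Set XAtom) : Set XAtom := applyAtom σ '' S

/-- a substitution leaves constants unchanged -/
def constPreserving (σ : XTerm → XTerm) : Prop :=
  ∀ c, σ (XTerm.const c) = XTerm.const c

/-- `σ` is a homomorphism from the set of atoms `A` to the set of atoms `B` -/
def isHom (σ : XTerm → XTerm) (A B : Set XAtom) : Prop :=
  constPreserving σ ∧ applySet σ A ⊆ B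

/-- the variables occurring in a finite set (list) of atoms -/
def listVars (l : List XAtom) : Set XTerm := {t | t.isVar ∧ ∃ a ∈ l, t ∈ a.args}

def XRule.bodySet (R : XRule) : Set XAtom := {a | a ∈ R.body}
def XRule.headSet (R : XRule) : Set XAtom := {a | a ∈ R.head}

/-- the frontier of a rule: the variables shared by its body and head -/
def XRule.frontier (R : XRule) : Set XTerm := listVars R.body ∩ listVars R.head

/-- the existential variables of a rule: variables of the head not in the body -/
def XRule.existVars (R : XRule) : Set XTerm := listVars R.head \ listVars R.body

/-- canonical encoding of the relevant part of a trigger's substitution -/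
def trigKey (R : XRule) (π : XTerm → XTerm) : List (XTerm × XTerm) :=
  (R.body.flatMap XAtom.args).map (fun t => (t, π t))

open Classical in
/-- the safe extension `π^s` of `π`: it maps each existential variable `z` of the
head to the fresh variable `z_{(R,π)}` determined by the trigger, and is `π`
elsewhere -/
noncomputable def safeExt (R : XRule) (π : XTerm → XTerm) : XTerm → XTerm := fun t =>
  if t ∈ R.existVars then
    XTerm.null (R.body.map fun a => (a.pred, a.args))
      (R.head.map fun a => (a.pred, a.args)) t (trigKey R π)
  else π t

/-- two triggers are the same when they have the same rule and their substitutions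
agree on the body (the domain of the substitution of a trigger) -/
def TrigEquiv (T T' : Trigger) : Prop :=
  T.rule = T'.rule ∧ ∀ t ∈ T.rule.body.flatMap XAtom.args, T.π t = T'.π t

/-- A (possibly infinite) derivation `D₀ = (∅,∅,F₀), D₁ = (R₁,π₁,F₁), …` from a
factbase `F` and a ruleset `𝓡`:  `tr i` is the trigger of the element `Dᵢ`
(defined for `1 ≤ i ≤` length) and `facts i` is its factbase `Fᵢ`; each `Fᵢ`
(`i ≥ 1`) is the immediate derivation from `Fᵢ₋₁` through `(Rᵢ,πᵢ)`, and all the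
triggers are pairwise distinct. -/
structure ChaseDerivation (𝓡 : Set XRule) (F : Set XAtom) where
  tr : ℕ → Option Trigger
  facts : ℕ → Set XAtom
  tr_zero : tr 0 = none
  facts_zero : facts 0 = F
  step_some : ∀ i T, tr (i+1) = some T →
    T.rule ∈ 𝓡 ∧ isHom T.π T.rule.bodySet (facts i) ∧
    facts (i+1) = facts i ∪ applySet (safeExt T.rule T.π) T.rule.headSet
  step_none : ∀ i, tr (i+1) = none → facts (i+1) = facts i
  closed : ∀ i, tr (i+2) ≠ none → tr (i+1) ≠ none
  distinct : ∀ i j T T', tr i = some T → tr j = some T' → i ≠ j → ¬ TrigEquiv T T'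

namespace Chase

variable {𝓡 : Set XRule} {F G : Set XAtom}

/-- the set of atoms produced by the `i`-th element of the derivation -/
noncomputable def producedAt (D : ChaseDerivation 𝓡 F) (i : ℕ) : Set XAtom :=
  match D.tr i with
  | some T => applySet (safeExt T.rule T.π) T.rule.headSet
  | none => ∅

def listMax (l : List ℕ) : ℕ := l.foldr max 0

open Classical in
noncomputable def rankStep (D : ChaseDerivation 𝓡 F) (prev : XAtom → ℕ) (A : XAtom) : ℕ :=
  if A ∈ D.facts 0 then 0
  else if h : ∃ i, A ∈ producedAt D i then
    match D.tr (Nat.find h) with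
    | some T => 1 + listMax ((T.rule.body.map (applyAtom T.π)).map prev)
    | none => 0
  else 0

noncomputable def rankFuel (D : ChaseDerivation 𝓡 F) : ℕ → XAtom → ℕ
  | 0 => fun _ => 0
  | n+1 => rankStep D (rankFuel D n)

open Classical in
/-- the index of the first trigger of the derivation producing a given atom -/
noncomputable def firstProd (D : ChaseDerivation 𝓡 F) (A : XAtom) : ℕ :=
  if h : ∃ i, A ∈ producedAt D i then Nat.find h else 0

/-- the rank of an atom in a derivation: `0` for the atoms of `F₀`, and otherwise
`1 +` the maximal rank of the atoms of `π(B)`, where `(R,π)` (with `R = (B,H)`)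
is the first trigger of the derivation such that `A ∈ π^s(H)` -/
noncomputable def rank (D : ChaseDerivation 𝓡 F) (A : XAtom) : ℕ :=
  rankFuel D (firstProd D A + 1) A

/-- the rank of a trigger `(R,π)`: `1 +` the maximal rank of the atoms of `π(B)` -/
noncomputable def trigRank (D : ChaseDerivation 𝓡 F) (T : Trigger) : ℕ :=
  1 + listMax ((T.rule.body.map (applyAtom T.π)).map (rank D))

/-- all atoms appearing in a derivation -/
def allAtoms (D : ChaseDerivation 𝓡 F) : Set XAtom := ⋃ i, D.facts i

/-- the derivation has depth (maximal rank of an atom) at most `k` -/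
def depthAtMost (D : ChaseDerivation 𝓡 F) (k : ℕ) : Prop :=
  ∀ A ∈ allAtoms D, rank D A ≤ k

/-- the derivation has depth at least `k` -/
def depthAtLeast (D : ChaseDerivation 𝓡 F) (k : ℕ) : Prop :=
  ∃ A ∈ allAtoms D, k ≤ rank D A

/-- O-applicability of a trigger on the subderivation `D₀,…,Dᵢ`:
its substitution is a homomorphism from the body to `Fᵢ` -/
def AppO (D : ChaseDerivation 𝓡 F) (i : ℕ) (T : Trigger) : Prop :=
  T.rule ∈ 𝓡 ∧ isHom T.π T.rule.bodySet (D.facts i)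

def frontierAgree (R : XRule) (π π' : XTerm → XTerm) : Prop :=
  ∀ t ∈ R.frontier, π t = π' t

/-- SO-applicability on `D₀,…,Dᵢ`: moreover no trigger of the subderivation has the
same rule with a substitution agreeing on the frontier -/
def AppSO (D : ChaseDerivation 𝓡 F) (i : ℕ) (T : Trigger) : Prop :=
  AppO D i T ∧ ∀ j T', j ≤ i → D.tr j = some T' →
    ¬ (T'.rule = T.rule ∧ frontierAgree T.rule T.π T'.π)

/-- R-applicability on `D₀,…,Dᵢ`: moreover `π` cannot be extended to a homomorphism
from `B ∪ H` to `Fᵢ` -/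
def AppR (D : ChaseDerivation 𝓡 F) (i : ℕ) (T : Trigger) : Prop :=
  AppO D i T ∧ ¬ ∃ σ : XTerm → XTerm,
    isHom σ (T.rule.bodySet ∪ T.rule.headSet) (D.facts i) ∧
    ∀ t ∈ listVars T.rule.body, σ t = T.π t

/-- logical equivalence of two sets of atoms: each maps to the other by homomorphism -/
def logEquiv (A B : Set XAtom) : Prop := (∃ σ, isHom σ A B) ∧ (∃ σ, isHom σ B A)

/-- E-applicability on `D₀,…,Dᵢ`: moreover `Fᵢ ∪ π^s(H)` is not logically
equivalent to `Fᵢ` -/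
def AppE (D : ChaseDerivation 𝓡 F) (i : ℕ) (T : Trigger) : Prop :=
  AppO D i T ∧
  ¬ logEquiv (D.facts i ∪ applySet (safeExt T.rule T.π) T.rule.headSet) (D.facts i)

/-- an O-chase derivation is any derivation -/
def OChase (_D : ChaseDerivation 𝓡 F) : Prop := True

/-- an SO-chase derivation: every trigger is SO-applicable on the preceding
subderivation -/
def SOChase (D : ChaseDerivation 𝓡 F) : Prop := ∀ i T, D.tr (i+1) = some T → AppSO D i T

/-- an R-chase derivation: every trigger is R-applicable on the preceding
subderivation -/
def RChase (D : ChaseDerivation 𝓡 F) : Prop := ∀ i T, D.tr (i+1) = some T → AppR D i T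

/-- rank compatibility: triggers appear in order of non-decreasing rank -/
def RankCompatible (D : ChaseDerivation 𝓡 F) : Prop :=
  ∀ i j T T', D.tr i = some T → D.tr j = some T' → i ≤ j →
    trigRank D T ≤ trigRank D T'

/-- rank exhaustiveness (w.r.t. an applicability criterion `App`): for every rank
`k` of a trigger of the derivation, if `Dᵢ` is the last element whose trigger has
rank `k` then every trigger `App`-applicable on `D₀,…,Dᵢ` has rank `k+1` -/
def RankExhaustive (App : ChaseDerivation 𝓡 F → ℕ → Trigger → Prop)
    (D : ChaseDerivation 𝓡 F) : Prop :=
  ∀ i T, D.tr i = some T →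
    (∀ j T', i < j → D.tr j = some T' → trigRank D T' ≠ trigRank D T) →
    ∀ T', App D i T' → trigRank D T' = trigRank D T + 1

/-- breadth-first derivation (w.r.t. an applicability criterion) -/
def BreadthFirst (App : ChaseDerivation 𝓡 F → ℕ → Trigger → Prop)
    (D : ChaseDerivation 𝓡 F) : Prop :=
  RankCompatible D ∧ RankExhaustive App D

/-- an E-chase derivation: an E-breadth-first derivation in which every trigger is
E-applicable on the preceding subderivation -/
def EChase (D : ChaseDerivation 𝓡 F) : Prop :=
  BreadthFirst AppE D ∧ ∀ i T, D.tr (i+1) = some T → AppE D i T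

/-- exhaustiveness: for every `i` and every trigger applicable on `D₀,…,Dᵢ` there is
`k ≥ i` such that either `D_k = (R,π,F_k)` or the trigger is not applicable on
`D₀,…,D_k` -/
def Exhaustive (App : ChaseDerivation 𝓡 F → ℕ → Trigger → Prop)
    (D : ChaseDerivation 𝓡 F) : Prop :=
  ∀ i T, App D i T →
    ∃ k, i ≤ k ∧ ((∃ T', D.tr k = some T' ∧ TrigEquiv T T') ∨ ¬ App D k T)

/-- the derivation is finite -/
def IsFiniteDeriv (D : ChaseDerivation 𝓡 F) : Prop := ∃ n, ∀ m, n ≤ m → D.tr m = none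

/-- a terminating derivation: exhaustive and finite -/
def Terminating (App : ChaseDerivation 𝓡 F → ℕ → Trigger → Prop)
    (D : ChaseDerivation 𝓡 F) : Prop :=
  Exhaustive App D ∧ IsFiniteDeriv D

/-- `D'` is a subderivation of `D`: its sequence of triggers is a subsequence of
that of `D` -/
def IsSubderivation (D' : ChaseDerivation 𝓡 G) (D : ChaseDerivation 𝓡 F) : Prop :=
  ∃ φ : ℕ → ℕ, StrictMono φ ∧
    ∀ i T, D'.tr (i+1) = some T → ∃ T', D.tr (φ i + 1) = some T' ∧ TrigEquiv T T'

/-- `D'` is the restriction of `D` induced by `G`: the maximal derivation from `G`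
and `𝓡` whose sequence of triggers is a subsequence of that of `D` -/
def IsRestriction (D : ChaseDerivation 𝓡 F) (G : Set XAtom) (D' : ChaseDerivation 𝓡 G) : Prop :=
  IsSubderivation D' D ∧
  ∀ D'' : ChaseDerivation 𝓡 G, IsSubderivation D'' D → IsSubderivation D'' D'

/-- `A'` is a direct ancestor of `A` in `D`: for some element `Dᵢ = (Rᵢ,πᵢ,Fᵢ)` of
`D`, `A' ∈ πᵢ(Bᵢ)` and `A ∈ Fᵢ \ Fᵢ₋₁` -/
def DirectAnc (D : ChaseDerivation 𝓡 F) (A' A : XAtom) : Prop :=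
  ∃ i T, D.tr (i+1) = some T ∧ A' ∈ applySet T.π T.rule.bodySet ∧
    A ∈ D.facts (i+1) ∧ A ∉ D.facts i

/-- the set of ancestors of an atom: the transitive closure of the direct-ancestor
relation -/
def Anc (D : ChaseDerivation 𝓡 F) (A : XAtom) : Set XAtom :=
  {A' | Relation.TransGen (DirectAnc D) A' A}

/-- the ancestors of a trigger `(R,π)`: the atoms of `π(B)` together with the
ancestors of these atoms -/
def TrigAnc (D : ChaseDerivation 𝓡 F) (T : Trigger) : Set XAtom :=
  applySet T.π T.rule.bodySet ∪ ⋃ A ∈ applySet T.π T.rule.bodySet, Anc D A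

end Chase

open Chase

/-- the atom `p(s,t)` (with `p` the binary predicate `0`) -/
def patm (s t : XTerm) : XAtom := ⟨0, [s, t]⟩

/-- the rule `p(x,y) → ∃z (p(y,z) ∧ p(z,y))` -/
def loopRule : XRule :=
  ⟨[patm (.var 0) (.var 1)], [patm (.var 1) (.var 2), patm (.var 2) (.var 1)]⟩

/-! If an exhaustive SO-chase derivation from `{p(a,b)}` were finite, every atom `p(s,t)` of its
final factbase would yield a trigger `x ↦ s, y ↦ t` that is applicable forever, so by
exhaustiveness some trigger of the derivation already maps the frontier variable `y` to `t`.
That trigger produced `p(t, z)` for a fresh null `z` built from `t`, hence strictly larger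
than `t`. So the finitely many images of `y` under the triggers of the derivation would have no
largest element. Boundedness fails already for the empty derivation from `{p(a,b)}`: it is
vacuously SO-breadth-first and finite, hence not exhaustive. -/

lemma Set.Finite.not_forall_exists_lt {α β : Type*} [LinearOrder β] {s : Set α}
    (hs : s.Finite) (hne : s.Nonempty) (f : α → β) : ¬ ∀ a ∈ s, ∃ b ∈ s, f a < f b := by
  intro h
  obtain ⟨a, ha, hmax⟩ := Set.exists_max_image s f hs hne
  obtain ⟨b, hb, hlt⟩ := h a ha
  exact (hmax b hb).not_gt hlt

namespace ChaseDerivation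

variable {𝓡 : Set XRule} {F : Set XAtom} (D : ChaseDerivation 𝓡 F)

def empty (𝓡 : Set XRule) (F : Set XAtom) : ChaseDerivation 𝓡 F where
  tr _ := none
  facts _ := F
  tr_zero := rfl
  facts_zero := rfl
  step_some _ _ h := nomatch h
  step_none _ _ := rfl
  closed _ h := absurd rfl h
  distinct _ _ _ _ h := nomatch h

lemma empty_isFiniteDeriv : IsFiniteDeriv (empty 𝓡 F) := ⟨0, fun _ _ => rfl⟩

lemma empty_soChase : SOChase (empty 𝓡 F) := fun _ _ h => nomatch h

lemma empty_breadthFirst : BreadthFirst AppSO (empty 𝓡 F) :=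
  And.intro (fun _ _ _ _ h => nomatch h) (fun _ _ h => nomatch h)

lemma facts_mono : Monotone D.facts := by
  refine monotone_nat_of_le_succ fun i => ?_
  cases h : D.tr (i+1) with
  | none => rw [D.step_none i h]
  | some T => rw [(D.step_some i T h).2.2]; exact Set.subset_union_left

lemma facts_subset_of_tr_none {n : ℕ} (hn : ∀ m, n ≤ m → D.tr m = none) (j : ℕ) :
    D.facts j ⊆ D.facts n := by
  rcases le_total j n with hjn | hnj
  · exact D.facts_mono hjn
  · obtain ⟨m, rfl⟩ := Nat.exists_eq_add_of_le hnj
    induction m with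
    | zero => rfl
    | succ m ih =>
      rw [← add_assoc, D.step_none _ (hn _ (by omega))]
      exact ih (by omega)

lemma finite_triggers (hD : IsFiniteDeriv D) : {T | ∃ j, D.tr j = some T}.Finite := by
  obtain ⟨n, hn⟩ := hD
  refine ((Set.finite_Iio n).image D.tr).preimage (Option.some_injective _).injOn |>.subset ?_
  rintro T ⟨j, hj⟩
  refine ⟨j, ?_, hj⟩
  by_contra hjn
  rw [hn j (not_lt.mp hjn)] at hj
  cases hj

end ChaseDerivation

namespace Chase

variable {𝓡 : Set XRule} {F : Set XAtom} {D : ChaseDerivation 𝓡 F}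

lemma AppO.mono {i k : ℕ} {T : Trigger} (h : AppO D i T) (hik : i ≤ k) : AppO D k T :=
  ⟨h.1, ⟨h.2.1, h.2.2.trans (D.facts_mono hik)⟩⟩

lemma exists_frontierAgree_of_exhaustive {n : ℕ} (hn : ∀ m, n ≤ m → D.tr m = none)
    (hex : Exhaustive AppSO D) {T : Trigger} (hT : AppO D n T) :
    ∃ j T', D.tr j = some T' ∧ T'.rule = T.rule ∧ frontierAgree T.rule T.π T'.π := by
  obtain ⟨k, hnk, hblocked⟩ : ∃ k, n ≤ k ∧ ¬ AppSO D k T := by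
    by_cases hSO : AppSO D n T
    · obtain ⟨k, hnk, ⟨T', hT', -⟩ | hblocked⟩ := hex n T hSO
      · rw [hn k hnk] at hT'; cases hT'
      · exact ⟨k, hnk, hblocked⟩
    · exact ⟨n, le_rfl, hSO⟩
  have := mt (And.intro (hT.mono hnk)) hblocked
  push Not at this
  obtain ⟨j, T', -, hj, hagree⟩ := this
  exact ⟨j, T', hj, hagree⟩

end Chase

namespace loopRule

lemma var_one_mem_body : XTerm.var 1 ∈ listVars loopRule.body :=
  ⟨trivial, patm (.var 0) (.var 1), by simp [loopRule], by simp [patm]⟩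

lemma var_one_mem_frontier : XTerm.var 1 ∈ loopRule.frontier :=
  ⟨var_one_mem_body, trivial, patm (.var 1) (.var 2), by simp [loopRule], by simp [patm]⟩

lemma var_two_mem_existVars : XTerm.var 2 ∈ loopRule.existVars := by
  refine ⟨⟨trivial, patm (.var 1) (.var 2), by simp [loopRule], by simp [patm]⟩, ?_⟩
  rintro ⟨-, a, ha, hmem⟩
  simp only [loopRule, List.mem_singleton] at ha
  simp [ha, patm] at hmem

/-- The null `z_{(R,π)}` created by the trigger of `loopRule` with `π(x) = s`, `π(y) = t`. -/
def null (s t : XTerm) : XTerm :=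
  .null [(0, [.var 0, .var 1])] [(0, [.var 1, .var 2]), (0, [.var 2, .var 1])]
    (.var 2) [(.var 0, s), (.var 1, t)]

lemma sizeOf_lt_null (s t : XTerm) : sizeOf t < sizeOf (null s t) := by
  simp only [null, XTerm.null.sizeOf_spec, List.cons.sizeOf_spec, Prod.mk.sizeOf_spec]
  omega

lemma safeExt_var_one (π : XTerm → XTerm) : safeExt loopRule π (.var 1) = π (.var 1) :=
  if_neg fun h => h.2 var_one_mem_body

lemma safeExt_var_two (π : XTerm → XTerm) :
    safeExt loopRule π (.var 2) = null (π (.var 0)) (π (.var 1)) :=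
  if_pos var_two_mem_existVars

def subst (s t : XTerm) : XTerm → XTerm
  | .var 0 => s
  | .var 1 => t
  | u => u

variable {F : Set XAtom} (D : ChaseDerivation {loopRule} F)

lemma appO_subst {k : ℕ} {s t : XTerm} (h : patm s t ∈ D.facts k) :
    AppO D k ⟨loopRule, subst s t⟩ := by
  refine ⟨rfl, fun _ => rfl, ?_⟩
  rintro _ ⟨a, ha, rfl⟩
  obtain rfl : a = patm (.var 0) (.var 1) := by simpa [XRule.bodySet, loopRule] using ha
  exact h

lemma patm_null_mem_facts {i : ℕ} {T : Trigger} (h : D.tr (i+1) = some T) :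
    patm (T.π (.var 1)) (null (T.π (.var 0)) (T.π (.var 1))) ∈ D.facts (i+1) := by
  obtain ⟨hrule, -, hfacts⟩ := D.step_some i T h
  rw [Set.mem_singleton_iff.mp hrule] at hfacts
  rw [hfacts]
  refine Or.inr ⟨patm (.var 1) (.var 2), by simp [XRule.headSet, loopRule], ?_⟩
  simp only [applyAtom, patm, List.map, safeExt_var_one, safeExt_var_two]

theorem not_isFiniteDeriv_of_exhaustive {s t : XTerm} (hF : patm s t ∈ F)
    (hex : Exhaustive AppSO D) : ¬ IsFiniteDeriv D := by
  rintro ⟨n, hn⟩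
  set S := (fun T : Trigger => T.π (.var 1)) '' {T | ∃ j, D.tr j = some T}
  have second_mem : ∀ {s t}, patm s t ∈ D.facts n → t ∈ S := by
    intro s t hst
    obtain ⟨j, T', hj, -, hagree⟩ :=
      exists_frontierAgree_of_exhaustive hn hex (appO_subst D hst)
    exact ⟨T', ⟨j, hj⟩, (hagree _ var_one_mem_frontier).symm⟩
  have hS : S.Nonempty := ⟨t, second_mem (D.facts_subset_of_tr_none hn 0 (D.facts_zero ▸ hF))⟩
  refine (D.finite_triggers ⟨n, hn⟩).image _ |>.not_forall_exists_lt hS sizeOf ?_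
  rintro _ ⟨T, ⟨j, hj⟩, rfl⟩
  obtain ⟨i, rfl⟩ : ∃ i, j = i + 1 :=
    Nat.exists_eq_add_one.mpr (Nat.pos_of_ne_zero fun h => by simp [h, D.tr_zero] at hj)
  exact ⟨_, second_mem (D.facts_subset_of_tr_none hn _ (patm_null_mem_facts D hj)),
    sizeOf_lt_null _ _⟩

end loopRule

/-- with `F = {p(a,b)}` (for distinct constants `a`, `b`), every
exhaustive SO-chase derivation from `F` and `{p(x,y) → ∃z (p(y,z) ∧ p(z,y))}` is
infinite; in particular this ruleset is not SO-`k`-bounded for any `k`. -/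
theorem loop_rule_not_SO_bounded :
    (∀ D : ChaseDerivation {loopRule} {patm (.const 0) (.const 1)},
      SOChase D → Exhaustive AppSO D → ¬ IsFiniteDeriv D) ∧
    ∀ k : ℕ, ¬ (∀ F : Set XAtom, F.Finite →
      ∀ D : ChaseDerivation {loopRule} F, SOChase D → BreadthFirst AppSO D →
        Terminating AppSO D ∧ depthAtMost D k) := by
  have infinite : ∀ D : ChaseDerivation {loopRule} {patm (.const 0) (.const 1)},
      Exhaustive AppSO D → ¬ IsFiniteDeriv D :=
    fun D => loopRule.not_isFiniteDeriv_of_exhaustive D rfl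
  refine ⟨fun D _ => infinite D, fun _ hbounded => ?_⟩
  obtain ⟨⟨hex, -⟩, -⟩ := hbounded _ (Set.finite_singleton _) (ChaseDerivation.empty _ _)
    ChaseDerivation.empty_soChase ChaseDerivation.empty_breadthFirst
  exact infinite _ hex ChaseDerivation.empty_isFiniteDeriv
end

section
/- Let p, q be binary predicates, let a, b be distinct constants, let F = {p(a,b)}, and let 𝓡 consist of the rules R1 = p(x,y) → ∃z p(y,z), R2 = p(x,y) → ∃z q(y,z), and R3 = q(y,z) → p(y,y). Then no R-breadth-first R-chase derivation from F and 𝓡 is terminating, but there exists a terminating (non-breadth-first) R-chase derivation from F and 𝓡, of depth at most 2. -/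
open Chase

/-- the atom `q(s,t)` (with `q` the binary predicate `1`) -/
def qatm (s t : XTerm) : XAtom := ⟨1, [s, t]⟩

/-- the rule `R1 = p(x,y) → ∃z p(y,z)` -/
def ruleOne : XRule := ⟨[patm (.var 0) (.var 1)], [patm (.var 1) (.var 2)]⟩

/-- the rule `R2 = p(x,y) → ∃z q(y,z)` -/
def ruleTwo : XRule := ⟨[patm (.var 0) (.var 1)], [qatm (.var 1) (.var 2)]⟩

/-- the rule `R3 = q(y,z) → p(y,y)` -/
def ruleThree : XRule := ⟨[qatm (.var 1) (.var 2)], [patm (.var 1) (.var 1)]⟩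

namespace Stmt18

def ca : XTerm := .const 0
def cb : XTerm := .const 1
def w0 : XTerm := .var 0
def w1 : XTerm := .var 1
def w2 : XTerm := .var 2

def enc (l : List XAtom) : List (ℕ × List XTerm) := l.map fun a => (a.pred, a.args)

def nullR1 (u v : XTerm) : XTerm :=
  .null (enc ruleOne.body) (enc ruleOne.head) w2 [(w0,u),(w1,v)]
def nullR2 (u v : XTerm) : XTerm :=
  .null (enc ruleTwo.body) (enc ruleTwo.head) w2 [(w0,u),(w1,v)]

lemma mem_applySet {σ : XTerm → XTerm} {S : Set XAtom} {A : XAtom} :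
    A ∈ applySet σ S ↔ ∃ B ∈ S, applyAtom σ B = A := Set.mem_image _ _ _

lemma applySet_singleton (σ : XTerm → XTerm) (x : XAtom) :
    applySet σ {a | a ∈ [x]} = {applyAtom σ x} := by
  ext A; simp [applySet]

lemma w2_mem_exist_one : w2 ∈ ruleOne.existVars := by
  constructor
  · exact ⟨trivial, patm w1 w2, by simp [ruleOne, w0, w1, w2], by simp [patm]⟩
  · rintro ⟨-, a, ha, hmem⟩
    simp [ruleOne] at ha
    subst ha
    simp [patm, w0, w1, w2] at hmem

lemma w1_not_mem_exist_one : w1 ∉ ruleOne.existVars := by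
  rintro ⟨-, h⟩
  exact h ⟨trivial, patm w0 w1, by simp [ruleOne, w0, w1, w2], by simp [patm]⟩

lemma w2_mem_exist_two : w2 ∈ ruleTwo.existVars := by
  constructor
  · exact ⟨trivial, qatm w1 w2, by simp [ruleTwo, w0, w1, w2], by simp [qatm]⟩
  · rintro ⟨-, a, ha, hmem⟩
    simp [ruleTwo] at ha
    subst ha
    simp [patm, w0, w1, w2] at hmem

lemma w1_not_mem_exist_two : w1 ∉ ruleTwo.existVars := by
  rintro ⟨-, h⟩
  exact h ⟨trivial, patm w0 w1, by simp [ruleTwo, w0, w1, w2], by simp [patm]⟩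

lemma w1_not_mem_exist_three : w1 ∉ ruleThree.existVars := by
  rintro ⟨-, h⟩
  exact h ⟨trivial, qatm w1 w2, by simp [ruleThree, w0, w1, w2], by simp [qatm]⟩

lemma trigKey_one (π : XTerm → XTerm) : trigKey ruleOne π = [(w0, π w0),(w1, π w1)] := by
  simp [trigKey, ruleOne, patm, w0, w1]

lemma trigKey_two (π : XTerm → XTerm) : trigKey ruleTwo π = [(w0, π w0),(w1, π w1)] := by
  simp [trigKey, ruleTwo, patm, w0, w1]

lemma headImage_one (π : XTerm → XTerm) :
    applySet (safeExt ruleOne π) ruleOne.headSet = {patm (π w1) (nullR1 (π w0) (π w1))} := by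
  have h : ruleOne.headSet = {a | a ∈ [patm w1 w2]} := rfl
  rw [h, applySet_singleton]
  have h1 : safeExt ruleOne π w1 = π w1 := by
    simp [safeExt, w1_not_mem_exist_one]
  have h2 : safeExt ruleOne π w2 = nullR1 (π w0) (π w1) := by
    simp only [safeExt, if_pos w2_mem_exist_one, nullR1, trigKey_one, enc]
  simp [applyAtom, patm, h1, h2]

lemma headImage_two (π : XTerm → XTerm) :
    applySet (safeExt ruleTwo π) ruleTwo.headSet = {qatm (π w1) (nullR2 (π w0) (π w1))} := by
  have h : ruleTwo.headSet = {a | a ∈ [qatm w1 w2]} := rfl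
  rw [h, applySet_singleton]
  have h1 : safeExt ruleTwo π w1 = π w1 := by
    simp [safeExt, w1_not_mem_exist_two]
  have h2 : safeExt ruleTwo π w2 = nullR2 (π w0) (π w1) := by
    simp only [safeExt, if_pos w2_mem_exist_two, nullR2, trigKey_two, enc]
  simp [applyAtom, qatm, h1, h2]

lemma headImage_three (π : XTerm → XTerm) :
    applySet (safeExt ruleThree π) ruleThree.headSet = {patm (π w1) (π w1)} := by
  have h : ruleThree.headSet = {a | a ∈ [patm w1 w1]} := rfl
  rw [h, applySet_singleton]
  have h1 : safeExt ruleThree π w1 = π w1 := by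
    simp [safeExt, w1_not_mem_exist_three]
  simp [applyAtom, patm, h1]

lemma bodyImage_one (π : XTerm → XTerm) :
    applySet π ruleOne.bodySet = {patm (π w0) (π w1)} := by
  have h : ruleOne.bodySet = {a | a ∈ [patm w0 w1]} := rfl
  rw [h, applySet_singleton]; simp [applyAtom, patm]

lemma bodyImage_two (π : XTerm → XTerm) :
    applySet π ruleTwo.bodySet = {patm (π w0) (π w1)} := by
  have h : ruleTwo.bodySet = {a | a ∈ [patm w0 w1]} := rfl
  rw [h, applySet_singleton]; simp [applyAtom, patm]

lemma bodyImage_three (π : XTerm → XTerm) :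
    applySet π ruleThree.bodySet = {qatm (π w1) (π w2)} := by
  have h : ruleThree.bodySet = {a | a ∈ [qatm w1 w2]} := rfl
  rw [h, applySet_singleton]; simp [applyAtom, qatm]

end Stmt18
namespace Stmt18
section General
open Classical
variable {𝓡 : Set XRule} {F : Set XAtom} (D : ChaseDerivation 𝓡 F)

lemma producedAt_zero : producedAt D 0 = ∅ := by
  simp [producedAt, D.tr_zero]

lemma tr_some_pos {i : ℕ} {T : Trigger} (h : D.tr i = some T) : 1 ≤ i := by
  rcases i with _|i
  · rw [D.tr_zero] at h; cases h
  · omega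

lemma facts_succ_subset (i : ℕ) : D.facts i ⊆ D.facts (i+1) := by
  cases h : D.tr (i+1) with
  | none => rw [D.step_none i h]
  | some T => rw [(D.step_some i T h).2.2]; exact Set.subset_union_left

lemma facts_mono {i j : ℕ} (h : i ≤ j) : D.facts i ⊆ D.facts j := by
  induction j with
  | zero => rw [Nat.le_zero.mp h]
  | succ j ih =>
    rcases Nat.lt_or_ge i (j+1) with h'|h'
    · exact (ih (by omega)).trans (facts_succ_subset D j)
    · have : i = j+1 := by omega
      subst this; exact subset_rfl

lemma mem_facts_cases {A : XAtom} {j : ℕ} (h : A ∈ D.facts j) :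
    A ∈ D.facts 0 ∨ ∃ i, 1 ≤ i ∧ i ≤ j ∧ A ∈ producedAt D i := by
  induction j with
  | zero => exact Or.inl h
  | succ j ih =>
    cases htr : D.tr (j+1) with
    | none =>
      rw [D.step_none j htr] at h
      rcases ih h with h|⟨i,h1,h2,h3⟩
      exacts [Or.inl h, Or.inr ⟨i,h1,by omega,h3⟩]
    | some T =>
      rw [(D.step_some j T htr).2.2] at h
      rcases h with h|h
      · rcases ih h with h|⟨i,h1,h2,h3⟩
        exacts [Or.inl h, Or.inr ⟨i,h1,by omega,h3⟩]
      · refine Or.inr ⟨j+1, by omega, le_refl _, ?_⟩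
        simpa [producedAt, htr] using h

lemma produced_mem_facts {A : XAtom} {i : ℕ} (h : A ∈ producedAt D i) : A ∈ D.facts i := by
  rcases i with _|i
  · rw [producedAt_zero] at h; cases h
  · cases htr : D.tr (i+1) with
    | none => simp [producedAt, htr] at h
    | some T =>
      rw [(D.step_some i T htr).2.2]
      right
      simpa [producedAt, htr] using h

lemma firstProd_eq {A : XAtom} (h : ∃ i, A ∈ producedAt D i) :
    firstProd D A = Nat.find h := by
  simp [firstProd, h]

lemma firstProd_spec {A : XAtom} (h : ∃ i, A ∈ producedAt D i) :
    A ∈ producedAt D (firstProd D A) := by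
  rw [firstProd_eq D h]; exact Nat.find_spec h

lemma firstProd_le {A : XAtom} {i : ℕ} (h' : A ∈ producedAt D i) : firstProd D A ≤ i := by
  rw [firstProd_eq D ⟨i, h'⟩]; exact Nat.find_le h'

lemma firstProd_pos {A : XAtom} (h : ∃ i, A ∈ producedAt D i) : 1 ≤ firstProd D A := by
  rcases Nat.eq_zero_or_pos (firstProd D A) with h0|h0
  · have hs := firstProd_spec D h
    rw [h0, producedAt_zero] at hs; cases hs
  · exact h0

lemma firstProd_tr {A : XAtom} (h : ∃ i, A ∈ producedAt D i) :
    ∃ T, D.tr (firstProd D A) = some T := by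
  have hs := firstProd_spec D h
  cases htr : D.tr (firstProd D A) with
  | none => simp [producedAt, htr] at hs
  | some T => exact ⟨T, rfl⟩

lemma rankStep_zero {prev : XAtom → ℕ} {A : XAtom} (h : A ∈ D.facts 0) :
    rankStep D prev A = 0 := by
  simp [rankStep, h]

lemma rankStep_eq_of_some {prev : XAtom → ℕ} {A : XAtom} (h0 : A ∉ D.facts 0)
    (h : ∃ i, A ∈ producedAt D i) {T : Trigger} (hT : D.tr (Nat.find h) = some T) :
    rankStep D prev A = 1 + listMax ((T.rule.body.map (applyAtom T.π)).map prev) := by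
  simp only [rankStep, if_neg h0]
  rw [dif_pos h, hT]

lemma rank_def' (A : XAtom) :
    Chase.rank D A = rankStep D (rankFuel D (firstProd D A)) A := rfl

lemma rank_zero {A : XAtom} (h : A ∈ D.facts 0) : Chase.rank D A = 0 := by
  rw [rank_def', rankStep_zero D h]

lemma body_mem_facts {j : ℕ} {T : Trigger} (hT : D.tr (j+1) = some T) :
    ∀ B ∈ T.rule.body.map (applyAtom T.π), B ∈ D.facts j := by
  intro B hB
  simp only [List.mem_map] at hB
  obtain ⟨b, hb, rfl⟩ := hB
  exact (D.step_some j T hT).2.1.2 ⟨b, hb, rfl⟩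

lemma rankFuel_stab : ∀ n m (A : XAtom), A ∈ D.facts m → m + 1 ≤ n →
    rankFuel D n A = Chase.rank D A := by
  intro n
  induction n using Nat.strong_induction_on with
  | _ n IH =>
  intro m A hA hmn
  rcases n with _|n'
  · omega
  by_cases h0 : A ∈ D.facts 0
  · show rankStep D (rankFuel D n') A = Chase.rank D A
    rw [rankStep_zero D h0, rank_zero D h0]
  · have hex : ∃ i, A ∈ producedAt D i := by
      rcases mem_facts_cases D hA with h|⟨i,_,_,h⟩
      · exact absurd h h0
      · exact ⟨i, h⟩
    obtain ⟨T, hT⟩ := firstProd_tr D hex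
    have hTfind : D.tr (Nat.find hex) = some T := by
      rw [← firstProd_eq D hex]; exact hT
    have hfp1 : 1 ≤ firstProd D A := firstProd_pos D hex
    have hfple : firstProd D A ≤ m := by
      rcases mem_facts_cases D hA with h|⟨i,_,hle,h⟩
      · exact absurd h h0
      · exact le_trans (firstProd_le D h) hle
    obtain ⟨j, hj⟩ : ∃ j, firstProd D A = j + 1 := ⟨firstProd D A - 1, by omega⟩
    have hbody := body_mem_facts D (hj ▸ hT)
    have hmaps : ∀ k, firstProd D A ≤ k → k < n'+1 →
        ((T.rule.body.map (applyAtom T.π)).map (rankFuel D k))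
          = (T.rule.body.map (applyAtom T.π)).map (Chase.rank D) := by
      intro k hk1 hk2
      refine List.map_congr_left ?_
      intro B hB
      exact IH k hk2 j B (hbody B hB) (by omega)
    show rankStep D (rankFuel D n') A = Chase.rank D A
    rw [rank_def' D, rankStep_eq_of_some D h0 hex hTfind,
      rankStep_eq_of_some D h0 hex hTfind]
    rw [hmaps n' (by omega) (by omega), hmaps (firstProd D A) le_rfl (by omega)]

lemma rank_eq_of_first {A : XAtom} {T : Trigger} (h0 : A ∉ D.facts 0)
    (hex : ∃ i, A ∈ producedAt D i) (hT : D.tr (firstProd D A) = some T) :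
    Chase.rank D A = 1 + listMax ((T.rule.body.map (applyAtom T.π)).map (Chase.rank D)) := by
  have hTfind : D.tr (Nat.find hex) = some T := by
    rw [← firstProd_eq D hex]; exact hT
  rw [rank_def' D, rankStep_eq_of_some D h0 hex hTfind]
  congr 1
  obtain ⟨j, hj⟩ : ∃ j, firstProd D A = j + 1 :=
    ⟨firstProd D A - 1, by have := firstProd_pos D hex; omega⟩
  have hbody := body_mem_facts D (hj ▸ hT)
  refine congrArg _ (List.map_congr_left ?_)
  intro B hB
  exact rankFuel_stab D (firstProd D A) j B (hbody B hB) (by omega)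

lemma listMax_single (x : ℕ) : listMax [x] = x := by simp [listMax]

lemma rank_eq_single {A : XAtom} {T : Trigger} {b : XAtom} (h0 : A ∉ D.facts 0)
    (hex : ∃ i, A ∈ producedAt D i) (hT : D.tr (firstProd D A) = some T)
    (hbody : T.rule.body = [b]) :
    Chase.rank D A = 1 + Chase.rank D (applyAtom T.π b) := by
  rw [rank_eq_of_first D h0 hex hT, hbody]
  simp [listMax]

lemma trigRank_single {T : Trigger} {b : XAtom} (hbody : T.rule.body = [b]) :
    trigRank D T = 1 + Chase.rank D (applyAtom T.π b) := by
  rw [trigRank, hbody]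
  simp [listMax]

end General
end Stmt18
namespace Stmt18
open Classical

def RS : Set XRule := {ruleOne, ruleTwo, ruleThree}
def FS : Set XAtom := {patm ca cb}

lemma patm_inj {a b c d : XTerm} : patm a b = patm c d ↔ a = c ∧ b = d := by
  simp [patm]

lemma qatm_inj {a b c d : XTerm} : qatm a b = qatm c d ↔ a = c ∧ b = d := by
  simp [qatm]

lemma patm_ne_qatm {a b c d : XTerm} : patm a b ≠ qatm c d := by
  simp [patm, qatm]

lemma nullR1_inj {a b c d : XTerm} : nullR1 a b = nullR1 c d ↔ a = c ∧ b = d := by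
  simp [nullR1]

lemma nullR2_inj {a b c d : XTerm} : nullR2 a b = nullR2 c d ↔ a = c ∧ b = d := by
  simp [nullR2]

lemma body_one : ruleOne.body = [patm w0 w1] := rfl
lemma body_two : ruleTwo.body = [patm w0 w1] := rfl
lemma body_three : ruleThree.body = [qatm w1 w2] := rfl

def ss : ℕ → XTerm
  | 0 => ca
  | 1 => cb
  | (k+2) => nullR1 (ss k) (ss (k+1))

lemma ss_two (k : ℕ) : ss (k+2) = nullR1 (ss k) (ss (k+1)) := rfl

lemma ss_size_lt (k : ℕ) : sizeOf (ss k) < sizeOf (ss (k+1)) := by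
  match k with
  | 0 => simp [ss, ca, cb]
  | (n+1) =>
    rw [ss_two]
    simp only [nullR1, XTerm.null.sizeOf_spec]
    have : sizeOf (ss (n+1)) ≤ sizeOf [(w0, ss n), (w1, ss (n+1))] := by
      simp
      omega
    omega

lemma ss_inj : Function.Injective ss := by
  have h : StrictMono (fun k => sizeOf (ss k)) := strictMono_nat_of_lt_succ ss_size_lt
  intro m n hmn
  exact h.injective (congrArg sizeOf hmn)

variable (D : ChaseDerivation RS FS)

lemma produced_shape {i : ℕ} {T : Trigger} (htr : D.tr (i+1) = some T) :
    (T.rule = ruleOne ∧ producedAt D (i+1) = {patm (T.π w1) (nullR1 (T.π w0) (T.π w1))}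
       ∧ patm (T.π w0) (T.π w1) ∈ D.facts i) ∨
    (T.rule = ruleTwo ∧ producedAt D (i+1) = {qatm (T.π w1) (nullR2 (T.π w0) (T.π w1))}
       ∧ patm (T.π w0) (T.π w1) ∈ D.facts i) ∨
    (T.rule = ruleThree ∧ producedAt D (i+1) = {patm (T.π w1) (T.π w1)}
       ∧ qatm (T.π w1) (T.π w2) ∈ D.facts i) := by
  obtain ⟨hrule, hhom, -⟩ := D.step_some i T htr
  have hprod : producedAt D (i+1) = applySet (safeExt T.rule T.π) T.rule.headSet := by
    simp [producedAt, htr]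
  have hsub := hhom.2
  simp only [RS, Set.mem_insert_iff, Set.mem_singleton_iff] at hrule
  rcases hrule with h|h|h
  · left
    refine ⟨h, ?_, ?_⟩
    · rw [hprod, h, headImage_one]
    · rw [h, bodyImage_one] at hsub; exact hsub rfl
  · right; left
    refine ⟨h, ?_, ?_⟩
    · rw [hprod, h, headImage_two]
    · rw [h, bodyImage_two] at hsub; exact hsub rfl
  · right; right
    refine ⟨h, ?_, ?_⟩
    · rw [hprod, h, headImage_three]
    · rw [h, bodyImage_three] at hsub; exact hsub rfl

lemma memP {u v : XTerm} {m : ℕ} (h : patm u v ∈ D.facts m) :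
    (u = ca ∧ v = cb) ∨
    (∃ j T, j+1 ≤ m ∧ D.tr (j+1) = some T ∧ T.rule = ruleOne ∧ T.π w1 = u
       ∧ v = nullR1 (T.π w0) u ∧ patm (T.π w0) u ∈ D.facts j) ∨
    (∃ j T, j+1 ≤ m ∧ D.tr (j+1) = some T ∧ T.rule = ruleThree ∧ T.π w1 = u
       ∧ v = u ∧ qatm u (T.π w2) ∈ D.facts j) := by
  rcases mem_facts_cases D h with h0|⟨i,h1,h2,h3⟩
  · left
    rw [D.facts_zero] at h0
    have : patm u v = patm ca cb := h0
    rw [patm_inj] at this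
    exact this
  · obtain ⟨j, rfl⟩ : ∃ j, i = j+1 := ⟨i-1, by omega⟩
    cases htr : D.tr (j+1) with
    | none => simp [producedAt, htr] at h3
    | some T =>
      rcases produced_shape D htr with ⟨hr, hp, hb⟩|⟨hr, hp, hb⟩|⟨hr, hp, hb⟩
      · rw [hp] at h3
        have he : patm u v = patm (T.π w1) (nullR1 (T.π w0) (T.π w1)) := h3
        rw [patm_inj] at he
        obtain ⟨he1, he2⟩ := he
        right; left
        exact ⟨j, T, by omega, htr, hr, he1.symm, by rw [he2, he1], by rw [he1]; exact hb⟩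
      · rw [hp] at h3
        exact absurd h3 patm_ne_qatm
      · rw [hp] at h3
        have he : patm u v = patm (T.π w1) (T.π w1) := h3
        rw [patm_inj] at he
        obtain ⟨he1, he2⟩ := he
        right; right
        exact ⟨j, T, by omega, htr, hr, he1.symm, by rw [he2, he1],
          by rw [he1]; exact hb⟩

lemma memQ {u v : XTerm} {m : ℕ} (h : qatm u v ∈ D.facts m) :
    ∃ j T, j+1 ≤ m ∧ D.tr (j+1) = some T ∧ T.rule = ruleTwo ∧ T.π w1 = u
       ∧ v = nullR2 (T.π w0) u ∧ patm (T.π w0) u ∈ D.facts j := by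
  rcases mem_facts_cases D h with h0|⟨i,h1,h2,h3⟩
  · rw [D.facts_zero] at h0
    exact absurd (h0 : qatm u v = patm ca cb) patm_ne_qatm.symm
  · obtain ⟨j, rfl⟩ : ∃ j, i = j+1 := ⟨i-1, by omega⟩
    cases htr : D.tr (j+1) with
    | none => simp [producedAt, htr] at h3
    | some T =>
      rcases produced_shape D htr with ⟨hr, hp, hb⟩|⟨hr, hp, hb⟩|⟨hr, hp, hb⟩
      · rw [hp] at h3; exact absurd (h3 : qatm u v = _) patm_ne_qatm.symm
      · rw [hp] at h3
        have he : qatm u v = qatm (T.π w1) (nullR2 (T.π w0) (T.π w1)) := h3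
        rw [qatm_inj] at he
        obtain ⟨he1, he2⟩ := he
        exact ⟨j, T, by omega, htr, hr, he1.symm, by rw [he2, he1], by rw [he1]; exact hb⟩
      · rw [hp] at h3; exact absurd (h3 : qatm u v = _) patm_ne_qatm.symm

lemma pin2 {u : XTerm} {k m : ℕ} (h : patm u (ss (k+1)) ∈ D.facts m) :
    u = ss k ∨ u = ss (k+1) := by
  rcases memP D h with ⟨hu, hv⟩|⟨j,T,_,_,hr,hw1,hv,_⟩|⟨j,T,_,_,hr,hw1,hv,_⟩
  · left
    have h1 : ss (k+1) = ss 1 := hv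
    have hk : k + 1 = 1 := ss_inj h1
    have hk0 : k = 0 := by omega
    subst hk0
    exact hu
  · left
    rcases k with _|k'
    · exact absurd hv (by simp [ss, cb, nullR1])
    · rw [ss_two] at hv
      obtain ⟨h1, h2⟩ := nullR1_inj.mp hv
      exact Or.inl h2.symm |>.elim (fun x => x) (fun x => x)
  · right; exact hv.symm
end Stmt18
namespace Stmt18
open Classical

def As (k : ℕ) : XAtom := patm (ss k) (ss (k+1))

noncomputable def πU (k : ℕ) : XTerm → XTerm :=
  fun t => if t = w0 then ss k else if t = w1 then ss (k+1) else t

noncomputable def UU (k : ℕ) : Trigger := ⟨ruleOne, πU k⟩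

lemma πU_w0 (k : ℕ) : πU k w0 = ss k := by simp [πU]

lemma πU_w1 (k : ℕ) : πU k w1 = ss (k+1) := by simp [πU, w0, w1]

lemma πU_const (k : ℕ) : constPreserving (πU k) := by
  intro c; simp [πU, w0, w1]

lemma w1_mem_lv_one : w1 ∈ listVars ruleOne.body :=
  ⟨trivial, patm w0 w1, by simp [ruleOne, patm, w0, w1], by simp [patm]⟩

lemma w1_mem_lv_two : w1 ∈ listVars ruleTwo.body :=
  ⟨trivial, patm w0 w1, by simp [ruleTwo, patm, w0, w1], by simp [patm]⟩

lemma w1_mem_lv_three : w1 ∈ listVars ruleThree.body :=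
  ⟨trivial, qatm w1 w2, by simp [ruleThree, qatm, w0, w1, w2], by simp [qatm]⟩

lemma head_mem_one : patm w1 w2 ∈ ruleOne.bodySet ∪ ruleOne.headSet :=
  Or.inr (by simp [ruleOne, XRule.headSet, patm, w0, w1, w2])

variable (D : ChaseDerivation RS FS)

lemma As_not_zero {k : ℕ} : As (k+1) ∉ D.facts 0 := by
  intro h
  rw [D.facts_zero] at h
  have h' : patm (ss (k+1)) (ss (k+2)) = patm ca cb := h
  rw [patm_inj] at h'
  have : ss (k+2) = ss 1 := h'.2
  have := ss_inj this; omega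

lemma rank_As_zero : Chase.rank D (As 0) = 0 := by
  apply rank_zero
  rw [D.facts_zero]; rfl

lemma applyAtom_p (σ : XTerm → XTerm) (x y : XTerm) :
    applyAtom σ (patm x y) = patm (σ x) (σ y) := by simp [applyAtom, patm]

lemma applyAtom_q (σ : XTerm → XTerm) (x y : XTerm) :
    applyAtom σ (qatm x y) = qatm (σ x) (σ y) := by simp [applyAtom, qatm]

lemma rank_As_succ {k m : ℕ} (h : As (k+1) ∈ D.facts m) :
    Chase.rank D (As (k+1)) = 1 + Chase.rank D (As k) := by
  have h0 := As_not_zero D (k := k)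
  have hex : ∃ i, As (k+1) ∈ producedAt D i := by
    rcases mem_facts_cases D h with h'|⟨i,_,_,h'⟩
    · exact absurd h' h0
    · exact ⟨i, h'⟩
  obtain ⟨T, hT⟩ := firstProd_tr D hex
  obtain ⟨j, hj⟩ : ∃ j, firstProd D (As (k+1)) = j + 1 :=
    ⟨firstProd D (As (k+1)) - 1, by have := firstProd_pos D hex; omega⟩
  have hspec := firstProd_spec D hex
  rw [hj] at hspec
  rcases produced_shape D (hj ▸ hT) with ⟨hr, hp, hb⟩|⟨hr, hp, hb⟩|⟨hr, hp, hb⟩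
  · rw [hp] at hspec
    have he : patm (ss (k+1)) (ss (k+2)) = patm (T.π w1) (nullR1 (T.π w0) (T.π w1)) := hspec
    rw [patm_inj] at he
    obtain ⟨he1, he2⟩ := he
    rw [ss_two, ← he1] at he2
    obtain ⟨hw0, -⟩ := nullR1_inj.mp he2
    rw [rank_eq_single D (b := patm w0 w1) h0 hex hT (by rw [hr]; rfl)]
    congr 1
    rw [applyAtom_p, ← hw0, ← he1]
    rfl
  · rw [hp] at hspec
    exact absurd (hspec : As (k+1) = _) patm_ne_qatm
  · rw [hp] at hspec
    have he : patm (ss (k+1)) (ss (k+2)) = patm (T.π w1) (T.π w1) := hspec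
    rw [patm_inj] at he
    have : ss (k+1) = ss (k+2) := by rw [he.1, he.2]
    have := ss_inj this; omega

lemma rank_q {k m : ℕ} (h : qatm (ss (k+1)) (nullR2 (ss k) (ss (k+1))) ∈ D.facts m) :
    Chase.rank D (qatm (ss (k+1)) (nullR2 (ss k) (ss (k+1)))) = 1 + Chase.rank D (As k) := by
  have h0 : qatm (ss (k+1)) (nullR2 (ss k) (ss (k+1))) ∉ D.facts 0 := by
    intro h'
    rw [D.facts_zero] at h'
    exact patm_ne_qatm ((h' : _ = patm ca cb)).symm
  have hex : ∃ i, qatm (ss (k+1)) (nullR2 (ss k) (ss (k+1))) ∈ producedAt D i := by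
    rcases mem_facts_cases D h with h'|⟨i,_,_,h'⟩
    · exact absurd h' h0
    · exact ⟨i, h'⟩
  obtain ⟨T, hT⟩ := firstProd_tr D hex
  obtain ⟨j, hj⟩ : ∃ j, firstProd D (qatm (ss (k+1)) (nullR2 (ss k) (ss (k+1)))) = j + 1 :=
    ⟨firstProd D (qatm (ss (k+1)) (nullR2 (ss k) (ss (k+1)))) - 1,
      by have := firstProd_pos D hex; omega⟩
  have hspec := firstProd_spec D hex
  rw [hj] at hspec
  rcases produced_shape D (hj ▸ hT) with ⟨hr, hp, hb⟩|⟨hr, hp, hb⟩|⟨hr, hp, hb⟩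
  · rw [hp] at hspec
    exact absurd (hspec : _ = _) patm_ne_qatm.symm
  · rw [hp] at hspec
    have he : qatm (ss (k+1)) (nullR2 (ss k) (ss (k+1)))
        = qatm (T.π w1) (nullR2 (T.π w0) (T.π w1)) := hspec
    rw [qatm_inj] at he
    obtain ⟨he1, he2⟩ := he
    rw [← he1] at he2
    obtain ⟨hw0, -⟩ := nullR2_inj.mp he2
    rw [rank_eq_single D (b := patm w0 w1) h0 hex hT (by rw [hr]; rfl)]
    congr 1
    rw [applyAtom_p, ← hw0, ← he1]
    rfl
  · rw [hp] at hspec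
    exact absurd (hspec : _ = _) patm_ne_qatm.symm

def Pk (k : ℕ) : Prop :=
  ∃ j T, D.tr (j+1) = some T ∧ T.rule = ruleOne ∧ T.π w0 = ss k ∧ T.π w1 = ss (k+1)

lemma desc {k : ℕ} (hnP : ¬ Pk D k) :
    ∀ m, ∀ u, patm (ss (k+1)) u ∈ D.facts m →
    ∃ j T, D.tr (j+1) = some T ∧ T.rule = ruleTwo ∧ T.π w0 = ss k ∧ T.π w1 = ss (k+1)
      ∧ As k ∈ D.facts j ∧ trigRank D T = 1 + Chase.rank D (As k) := by
  intro m
  induction m using Nat.strong_induction_on with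
  | _ m IH =>
  intro u h
  rcases memP D h with ⟨hu, hv⟩|⟨j,T,hj,htr,hr,hw1,hv,hb⟩|⟨j,T,hj,htr,hr,hw1,hv,hb⟩
  · exact absurd (ss_inj (show ss (k+1) = ss 0 by rw [hu]; rfl)) (by omega)
  · rcases pin2 D hb with h'|h'
    · exact absurd ⟨j, T, htr, hr, h', hw1⟩ hnP
    · rw [h'] at hb
      exact IH j (by omega) _ hb
  · obtain ⟨j2, T2, hj2, htr2, hr2, hw1', hv', hb'⟩ := memQ D hb
    rcases pin2 D hb' with h'|h'
    · refine ⟨j2, T2, htr2, hr2, h', hw1', ?_, ?_⟩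
      · rw [h'] at hb'; exact hb'
      · rw [trigRank_single D (b := patm w0 w1) (by rw [hr2]; rfl)]
        rw [applyAtom_p, h', hw1']
        rfl
    · rw [h'] at hb'
      exact IH j2 (by omega) _ hb'

lemma step_main (hBF : BreadthFirst AppR D) (hTerm : Terminating AppR D)
    (k : ℕ) (hrank : Chase.rank D (As k) = k) (hmem : ∃ m, As k ∈ D.facts m) :
    Pk D k := by
  by_contra hnP
  obtain ⟨hRCp, hRE⟩ := hBF
  obtain ⟨hExh, N, hN⟩ := hTerm
  obtain ⟨m0, hm0⟩ := hmem
  have hUbody : applySet (UU k).π (UU k).rule.bodySet = {As k} := by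
    show applySet (πU k) ruleOne.bodySet = {As k}
    rw [bodyImage_one, πU_w0, πU_w1]; rfl
  have hAppO : ∀ i, As k ∈ D.facts i → AppO D i (UU k) := by
    intro i hi
    refine ⟨by simp [RS, UU], πU_const k, ?_⟩
    rw [hUbody]
    intro A hA
    rw [hA]; exact hi
  have hAppR : ∀ i, As k ∈ D.facts i → (∀ w, patm (ss (k+1)) w ∉ D.facts i) →
      AppR D i (UU k) := by
    intro i hi hno
    refine ⟨hAppO i hi, ?_⟩
    rintro ⟨σ, hσ, hagree⟩
    have hσ1 : σ w1 = ss (k+1) := by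
      rw [hagree w1 w1_mem_lv_one]; exact πU_w1 k
    have hmem' : applyAtom σ (patm w1 w2) ∈ D.facts i :=
      hσ.2 ⟨patm w1 w2, head_mem_one, rfl⟩
    rw [applyAtom_p, hσ1] at hmem'
    exact hno (σ w2) hmem'
  by_cases Hbad : ∃ m w, patm (ss (k+1)) w ∈ D.facts m
  · obtain ⟨mB, wB, hbad⟩ := Hbad
    obtain ⟨jV, V, htrV, hrV, hVw0, hVw1, hVb, hVrk⟩ := desc D hnP mB wB hbad
    rw [hrank] at hVrk
    -- index bound
    have hbound : ∀ i T', D.tr i = some T' → i < N := by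
      intro i T' hi
      by_contra hc
      rw [hN i (by omega)] at hi; cases hi
    set Pp : ℕ → Prop := fun i => ∃ T', D.tr i = some T' ∧ trigRank D T' = 1 + k with hPp
    have hPV : Pp (jV+1) := ⟨V, htrV, hVrk⟩
    have hjVN : jV + 1 ≤ N := le_of_lt (hbound _ _ htrV)
    set istar := Nat.findGreatest Pp N with histar
    have hPstar : Pp istar := Nat.findGreatest_spec hjVN hPV
    obtain ⟨Tstar, htrstar, hrkstar⟩ := hPstar
    have hle_istar : jV + 1 ≤ istar := Nat.le_findGreatest hjVN hPV
    have hlater : ∀ j T', istar < j → D.tr j = some T' → trigRank D T' ≠ trigRank D Tstar := by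
      intro j T' hlt hj hcon
      have : ¬ Pp j := Nat.findGreatest_is_greatest hlt (le_of_lt (hbound _ _ hj))
      exact this ⟨T', hj, by rw [hcon, hrkstar]⟩
    have forbid : ∀ m, m ≤ istar → ∀ w, patm (ss (k+1)) w ∉ D.facts m := by
      intro m
      induction m using Nat.strong_induction_on with
      | _ m IH =>
      intro hm w hw
      rcases memP D hw with ⟨hu,hv⟩|⟨j,T,hj,htr,hr,hw1,hv,hb⟩|⟨j,T,hj,htr,hr,hw1,hv,hb⟩
      · exact absurd (ss_inj (show ss (k+1) = ss 0 by rw [hu]; rfl)) (by omega)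
      · rcases pin2 D hb with h'|h'
        · exact hnP ⟨j, T, htr, hr, h', hw1⟩
        · rw [h'] at hb
          exact IH j (by omega) (by omega) _ hb
      · obtain ⟨j2, T2, hj2, htr2, hr2, hw1', hv', hb'⟩ := memQ D hb
        rcases pin2 D hb' with h'|h'
        · -- rank contradiction
          have hq : T.π w2 = nullR2 (ss k) (ss (k+1)) := by
            rw [hv', h']
          rw [hq] at hb
          have hqrank := rank_q D hb
          have htr_rank : trigRank D T = k + 2 := by
            rw [trigRank_single D (b := qatm w1 w2) (by rw [hr]; rfl)]
            rw [applyAtom_q, hw1, hq, hqrank, hrank]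
            omega
          have hcmp := hRCp (j+1) istar T Tstar htr htrstar (by omega)
          rw [htr_rank, hrkstar] at hcmp
          omega
        · rw [h'] at hb'
          exact IH j2 (by omega) (by omega) _ hb'
    have hAsStar : As k ∈ D.facts istar :=
      facts_mono D (by omega) hVb
    have hUAppR : AppR D istar (UU k) := hAppR istar hAsStar (forbid istar le_rfl)
    have hres := hRE istar Tstar htrstar
      (fun j T' hlt hj => hlater j T' hlt hj) (UU k) hUAppR
    have hUrk : trigRank D (UU k) = 1 + k := by
      rw [trigRank_single D (b := patm w0 w1) rfl]
      show 1 + Chase.rank D (applyAtom (πU k) (patm w0 w1)) = 1 + k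
      rw [applyAtom_p, πU_w0, πU_w1, show patm (ss k) (ss (k+1)) = As k from rfl, hrank]
    rw [hUrk, hrkstar] at hres
    omega
  · -- U_k is applicable forever; exhaustiveness forces it to fire
    push_neg at Hbad
    have hUApp : AppR D m0 (UU k) := hAppR m0 hm0 (fun w => Hbad m0 w)
    obtain ⟨k', hk', hor⟩ := hExh m0 (UU k) hUApp
    rcases hor with ⟨T', htr', hTE⟩|hnapp
    · obtain ⟨j, hj⟩ : ∃ j, k' = j + 1 := ⟨k' - 1, by have := tr_some_pos D htr'; omega⟩
      refine hnP ⟨j, T', by rw [← hj]; exact htr', hTE.1.symm, ?_, ?_⟩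
      · rw [← hTE.2 w0 (by simp [UU, ruleOne, patm, w0, w1])]
        exact πU_w0 k
      · rw [← hTE.2 w1 (by simp [UU, ruleOne, patm, w0, w1])]
        exact πU_w1 k
    · exact hnapp (hAppR k' (facts_mono D hk' hm0) (fun w => Hbad k' w))

lemma chain (hBF : BreadthFirst AppR D) (hTerm : Terminating AppR D) :
    ∀ k, (Chase.rank D (As k) = k ∧ ∃ m, As k ∈ D.facts m) ∧ Pk D k := by
  intro k
  induction k with
  | zero =>
    have h0 : As 0 ∈ D.facts 0 := by rw [D.facts_zero]; rfl
    have hr := rank_As_zero D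
    exact ⟨⟨hr, 0, h0⟩, step_main D hBF hTerm 0 hr ⟨0, h0⟩⟩
  | succ k ih =>
    obtain ⟨⟨hrk, hmem⟩, hPk⟩ := ih
    obtain ⟨j, T, htr, hr, h0, h1⟩ := hPk
    have hmemS : As (k+1) ∈ D.facts (j+1) := by
      rw [(D.step_some j T htr).2.2, hr, headImage_one]
      right
      rw [h0, h1, ← ss_two]
      rfl
    have hrk' : Chase.rank D (As (k+1)) = k+1 := by
      rw [rank_As_succ D hmemS, hrk]
      omega
    exact ⟨⟨hrk', j+1, hmemS⟩, step_main D hBF hTerm (k+1) hrk' ⟨j+1, hmemS⟩⟩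

lemma part1 (hBF : BreadthFirst AppR D) : ¬ Terminating AppR D := by
  intro hTerm
  have hch := chain D hBF hTerm
  obtain ⟨N, hN⟩ := hTerm.2
  have hidx : ∀ k, ∃ i, i < N ∧ ∃ T, D.tr i = some T ∧ T.π w1 = ss (k+1) := by
    intro k
    obtain ⟨j, T, htr, -, -, h1⟩ := (hch k).2
    refine ⟨j+1, ?_, T, htr, h1⟩
    by_contra hc
    rw [hN (j+1) (by omega)] at htr; cases htr
  choose f hfN hfT using hidx
  have hinj : Function.Injective f := by
    intro a b hab
    obtain ⟨Ta, htra, h1a⟩ := hfT a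
    obtain ⟨Tb, htrb, h1b⟩ := hfT b
    rw [hab, htrb] at htra
    injection htra with hTT
    subst hTT
    have : ss (a+1) = ss (b+1) := by rw [← h1a, ← h1b]
    have := ss_inj this; omega
  have hcard := Finset.card_le_card_of_injOn f
    (fun a _ => Finset.mem_range.mpr (hfN a)) (hinj.injOn)
    (s := Finset.range (N+1)) (t := Finset.range N)
  simp only [Finset.card_range] at hcard
  omega

end Stmt18
namespace Stmt18
open Classical

lemma ca_ne_cb : ca ≠ cb := by simp [ca, cb]

noncomputable def π1 : XTerm → XTerm :=
  fun t => if t = w0 then ca else if t = w1 then cb else t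
noncomputable def π2 : XTerm → XTerm :=
  fun t => if t = w1 then cb else if t = w2 then nullR2 ca cb else t

noncomputable def TA : Trigger := ⟨ruleTwo, π1⟩
noncomputable def TB : Trigger := ⟨ruleThree, π2⟩

lemma π1_w0 : π1 w0 = ca := by simp [π1]
lemma π1_w1 : π1 w1 = cb := by simp [π1, w0, w1]
lemma π1_const : constPreserving π1 := by intro c; simp [π1, w0, w1]
lemma π2_w1 : π2 w1 = cb := by simp [π2]
lemma π2_w2 : π2 w2 = nullR2 ca cb := by simp [π2, w1, w2]
lemma π2_const : constPreserving π2 := by intro c; simp [π2, w1, w2]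

noncomputable def G1 : Set XAtom := FS ∪ applySet (safeExt ruleTwo π1) ruleTwo.headSet
noncomputable def G2 : Set XAtom := G1 ∪ applySet (safeExt ruleThree π2) ruleThree.headSet

lemma G1_eq : G1 = {patm ca cb, qatm cb (nullR2 ca cb)} := by
  rw [G1, headImage_two, π1_w0, π1_w1, FS]
  rw [Set.singleton_union]

lemma G2_eq : G2 = {patm ca cb, qatm cb (nullR2 ca cb), patm cb cb} := by
  rw [G2, headImage_three, π2_w1, G1_eq]
  ext A
  simp only [Set.mem_union, Set.mem_insert_iff, Set.mem_singleton_iff]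
  tauto

noncomputable def trF : ℕ → Option Trigger :=
  fun i => if i = 1 then some TA else if i = 2 then some TB else none
noncomputable def faF : ℕ → Set XAtom :=
  fun i => if i = 0 then FS else if i = 1 then G1 else G2

lemma trF_one : trF 1 = some TA := rfl
lemma trF_two : trF 2 = some TB := rfl
lemma trF_other (m : ℕ) (h1 : m ≠ 1) (h2 : m ≠ 2) : trF m = none := by
  simp [trF, h1, h2]
lemma faF_zero : faF 0 = FS := rfl
lemma faF_one : faF 1 = G1 := rfl
lemma faF_ge (m : ℕ) (h : 2 ≤ m) : faF m = G2 := by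
  rw [faF]
  rw [if_neg (by omega), if_neg (by omega)]

lemma trF_cases {m : ℕ} {T : Trigger} (h : trF m = some T) :
    (m = 1 ∧ T = TA) ∨ (m = 2 ∧ T = TB) := by
  by_cases h1 : m = 1
  · subst h1; rw [trF_one] at h; exact Or.inl ⟨rfl, (Option.some.inj h).symm⟩
  · by_cases h2 : m = 2
    · subst h2; rw [trF_two] at h; exact Or.inr ⟨rfl, (Option.some.inj h).symm⟩
    · rw [trF_other m h1 h2] at h; cases h

lemma two_ne_three : ruleTwo ≠ ruleThree := by
  simp [ruleTwo, ruleThree, patm, qatm]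

noncomputable def DD : ChaseDerivation RS FS where
  tr := trF
  facts := faF
  tr_zero := rfl
  facts_zero := rfl
  step_some := by
    intro i T h
    rcases i with _|_|i
    · rw [trF_one] at h
      injection h with h; subst h
      refine ⟨by simp [RS, TA], ⟨π1_const, ?_⟩, rfl⟩
      show applySet π1 ruleTwo.bodySet ⊆ FS
      rw [bodyImage_two, π1_w0, π1_w1]
      exact subset_rfl
    · rw [trF_two] at h
      injection h with h; subst h
      refine ⟨by simp [RS, TB], ⟨π2_const, ?_⟩, rfl⟩
      show applySet π2 ruleThree.bodySet ⊆ G1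
      rw [bodyImage_three, π2_w1, π2_w2, G1_eq]
      intro A hA
      rw [hA]
      exact Or.inr rfl
    · rw [trF_other (i+2+1) (by omega) (by omega)] at h
      cases h
  step_none := by
    intro i h
    rcases i with _|_|i
    · rw [trF_one] at h; cases h
    · rw [trF_two] at h; cases h
    · show faF (i+3) = faF (i+2)
      rw [faF_ge _ (by omega), faF_ge _ (by omega)]
  closed := by
    intro i h
    rcases i with _|i
    · rw [trF_one]; simp
    · exact absurd (trF_other (i+1+2) (by omega) (by omega)) h
  distinct := by
    intro i j T T' hi hj hij hTE
    rcases trF_cases hi with ⟨hi1, rfl⟩|⟨hi2, rfl⟩ <;>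
      rcases trF_cases hj with ⟨hj1, rfl⟩|⟨hj2, rfl⟩
    · omega
    · exact two_ne_three hTE.1
    · exact two_ne_three hTE.1.symm
    · omega

lemma DD_tr_one : DD.tr 1 = some TA := rfl
lemma DD_tr_two : DD.tr 2 = some TB := rfl

lemma qatom_mem_G2 : qatm cb (nullR2 ca cb) ∈ G2 := by
  rw [G2_eq]; exact Or.inr (Or.inl rfl)
lemma patom0_mem_G2 : patm ca cb ∈ G2 := by
  rw [G2_eq]; exact Or.inl rfl
lemma patom3_mem_G2 : patm cb cb ∈ G2 := by
  rw [G2_eq]; exact Or.inr (Or.inr rfl)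

lemma rchase_DD : RChase DD := by
  intro i T h
  rcases i with _|_|i
  · rw [DD_tr_one] at h
    injection h with h; subst h
    constructor
    · refine ⟨by simp [RS, TA], π1_const, ?_⟩
      show applySet π1 ruleTwo.bodySet ⊆ FS
      rw [bodyImage_two, π1_w0, π1_w1]
      exact subset_rfl
    · rintro ⟨σ, hσ, hag⟩
      have hq : applyAtom σ (qatm w1 w2) ∈ FS :=
        hσ.2 ⟨qatm w1 w2, Or.inr (by simp [TA, ruleTwo, XRule.headSet, qatm, w1, w2]), rfl⟩
      rw [applyAtom_q] at hq
      exact patm_ne_qatm (show patm ca cb = _ from (hq : _ = patm ca cb).symm)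
  · rw [DD_tr_two] at h
    injection h with h; subst h
    constructor
    · refine ⟨by simp [RS, TB], π2_const, ?_⟩
      show applySet π2 ruleThree.bodySet ⊆ G1
      rw [bodyImage_three, π2_w1, π2_w2, G1_eq]
      intro A hA
      rw [hA]
      exact Or.inr rfl
    · rintro ⟨σ, hσ, hag⟩
      have hσ1 : σ w1 = cb := by
        rw [hag w1 w1_mem_lv_three]; exact π2_w1
      have hp : applyAtom σ (patm w1 w1) ∈ G1 :=
        hσ.2 ⟨patm w1 w1, Or.inr (by simp [TB, ruleThree, XRule.headSet, patm, w1, w2]), rfl⟩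
      rw [applyAtom_p, hσ1, G1_eq] at hp
      rcases hp with hp|hp
      · exact ca_ne_cb (patm_inj.mp hp).1.symm
      · exact patm_ne_qatm hp
  · have hn : DD.tr (i+2+1) = none := trF_other (i+2+1) (by omega) (by omega)
    rw [hn] at h
    cases h

lemma noapp (m : ℕ) (hm : 2 ≤ m) (T : Trigger) : ¬ AppR DD m T := by
  rintro ⟨⟨hrule, hconst, hsub⟩, hnext⟩
  have hf : DD.facts m = G2 := faF_ge m hm
  rw [hf] at hsub
  simp only [RS, Set.mem_insert_iff, Set.mem_singleton_iff] at hrule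
  rcases hrule with hr|hr|hr
  · -- ruleOne
    have hb : patm (T.π w0) (T.π w1) ∈ G2 := by
      have := hsub (by rw [hr, bodyImage_one]; rfl)
      exact this
    have hw1 : T.π w1 = cb := by
      rw [G2_eq] at hb
      rcases hb with hb|hb|hb
      · exact (patm_inj.mp hb).2
      · exact absurd hb patm_ne_qatm
      · exact (patm_inj.mp hb).2
    apply hnext
    set σ : XTerm → XTerm := fun t => if t = w2 then cb else T.π t with hσdef
    have hσ0 : σ w0 = T.π w0 := if_neg (by simp [w0, w2])
    have hσ1 : σ w1 = T.π w1 := if_neg (by simp [w1, w2])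
    have hσ2 : σ w2 = cb := if_pos rfl
    refine ⟨σ, ⟨?_, ?_⟩, ?_⟩
    · intro c
      have : σ (XTerm.const c) = T.π (XTerm.const c) := if_neg (by simp [w2])
      rw [this]
      exact hconst c
    · rintro A ⟨B, hB, rfl⟩
      rw [hf]
      rcases hB with hB|hB
      · have hB' : B = patm w0 w1 := by rw [hr] at hB; exact List.mem_singleton.mp hB
        subst hB'
        rw [applyAtom_p, hσ0, hσ1]
        exact hb
      · have hB' : B = patm w1 w2 := by rw [hr] at hB; exact List.mem_singleton.mp hB
        subst hB'
        rw [applyAtom_p, hσ1, hσ2, hw1]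
        exact patom3_mem_G2
    · intro t ht
      obtain ⟨-, a, ha, hta⟩ := ht
      rw [hr] at ha
      have ha' : a = patm w0 w1 := List.mem_singleton.mp ha
      subst ha'
      have : t = w0 ∨ t = w1 := by simpa [patm] using hta
      rcases this with rfl|rfl
      · exact hσ0
      · exact hσ1
  · -- ruleTwo
    have hb : patm (T.π w0) (T.π w1) ∈ G2 := by
      have := hsub (by rw [hr, bodyImage_two]; rfl)
      exact this
    have hw1 : T.π w1 = cb := by
      rw [G2_eq] at hb
      rcases hb with hb|hb|hb
      · exact (patm_inj.mp hb).2
      · exact absurd hb patm_ne_qatm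
      · exact (patm_inj.mp hb).2
    apply hnext
    set σ : XTerm → XTerm := fun t => if t = w2 then nullR2 ca cb else T.π t with hσdef
    have hσ0 : σ w0 = T.π w0 := if_neg (by simp [w0, w2])
    have hσ1 : σ w1 = T.π w1 := if_neg (by simp [w1, w2])
    have hσ2 : σ w2 = nullR2 ca cb := if_pos rfl
    refine ⟨σ, ⟨?_, ?_⟩, ?_⟩
    · intro c
      have : σ (XTerm.const c) = T.π (XTerm.const c) := if_neg (by simp [w2])
      rw [this]
      exact hconst c
    · rintro A ⟨B, hB, rfl⟩
      rw [hf]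
      rcases hB with hB|hB
      · have hB' : B = patm w0 w1 := by rw [hr] at hB; exact List.mem_singleton.mp hB
        subst hB'
        rw [applyAtom_p, hσ0, hσ1]
        exact hb
      · have hB' : B = qatm w1 w2 := by rw [hr] at hB; exact List.mem_singleton.mp hB
        subst hB'
        rw [applyAtom_q, hσ1, hσ2, hw1]
        exact qatom_mem_G2
    · intro t ht
      obtain ⟨-, a, ha, hta⟩ := ht
      rw [hr] at ha
      have ha' : a = patm w0 w1 := List.mem_singleton.mp ha
      subst ha'
      have : t = w0 ∨ t = w1 := by simpa [patm] using hta
      rcases this with rfl|rfl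
      · exact hσ0
      · exact hσ1
  · -- ruleThree
    have hb : qatm (T.π w1) (T.π w2) ∈ G2 := by
      have := hsub (by rw [hr, bodyImage_three]; rfl)
      exact this
    have hw1 : T.π w1 = cb := by
      rw [G2_eq] at hb
      rcases hb with hb|hb|hb
      · exact absurd hb.symm patm_ne_qatm
      · exact (qatm_inj.mp hb).1
      · exact absurd hb.symm patm_ne_qatm
    apply hnext
    refine ⟨T.π, ⟨hconst, ?_⟩, fun t _ => rfl⟩
    rintro A ⟨B, hB, rfl⟩
    rw [hf]
    rcases hB with hB|hB
    · have hB' : B = qatm w1 w2 := by rw [hr] at hB; exact List.mem_singleton.mp hB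
      subst hB'
      rw [applyAtom_q]
      exact hb
    · have hB' : B = patm w1 w1 := by rw [hr] at hB; exact List.mem_singleton.mp hB
      subst hB'
      rw [applyAtom_p, hw1]
      exact patom3_mem_G2

lemma term_DD : Terminating AppR DD := by
  constructor
  · intro i T hApp
    exact ⟨max i 2, le_max_left _ _, Or.inr (noapp (max i 2) (le_max_right _ _) T)⟩
  · exact ⟨3, fun m hm => trF_other m (by omega) (by omega)⟩

lemma producedAt_DD_one : producedAt DD 1 = {qatm cb (nullR2 ca cb)} := by
  have h : producedAt DD 1 = applySet (safeExt TA.rule TA.π) TA.rule.headSet := by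
    simp [producedAt, DD_tr_one]
  rw [h]
  show applySet (safeExt ruleTwo π1) ruleTwo.headSet = _
  rw [headImage_two, π1_w0, π1_w1]

lemma producedAt_DD_two : producedAt DD 2 = {patm cb cb} := by
  have h : producedAt DD 2 = applySet (safeExt TB.rule TB.π) TB.rule.headSet := by
    simp [producedAt, DD_tr_two]
  rw [h]
  show applySet (safeExt ruleThree π2) ruleThree.headSet = _
  rw [headImage_three, π2_w1]

lemma rank_q_DD : Chase.rank DD (qatm cb (nullR2 ca cb)) = 1 := by
  have h0 : qatm cb (nullR2 ca cb) ∉ DD.facts 0 := by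
    intro h
    exact patm_ne_qatm ((h : _ = patm ca cb)).symm
  have hprod : qatm cb (nullR2 ca cb) ∈ producedAt DD 1 := by
    rw [producedAt_DD_one]; rfl
  have hex : ∃ i, qatm cb (nullR2 ca cb) ∈ producedAt DD i := ⟨1, hprod⟩
  have hfp : firstProd DD (qatm cb (nullR2 ca cb)) = 1 := by
    have h1 := firstProd_le DD hprod
    have h2 := firstProd_pos DD hex
    omega
  have := rank_eq_single DD (b := patm w0 w1) h0 hex
    (by rw [hfp]; exact DD_tr_one) (by rfl)
  rw [this, applyAtom_p]
  show 1 + Chase.rank DD (patm (π1 w0) (π1 w1)) = 1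
  rw [π1_w0, π1_w1, rank_zero DD (by rw [DD.facts_zero]; rfl)]

lemma rank_p3_DD : Chase.rank DD (patm cb cb) = 2 := by
  have h0 : patm cb cb ∉ DD.facts 0 := by
    intro h
    exact ca_ne_cb ((patm_inj.mp (h : _ = patm ca cb)).1).symm
  have hprod : patm cb cb ∈ producedAt DD 2 := by
    rw [producedAt_DD_two]; rfl
  have hex : ∃ i, patm cb cb ∈ producedAt DD i := ⟨2, hprod⟩
  have hfp : firstProd DD (patm cb cb) = 2 := by
    have h1 := firstProd_le DD hprod
    have h2 := firstProd_pos DD hex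
    have h3 : firstProd DD (patm cb cb) ≠ 1 := by
      intro hc
      have := firstProd_spec DD hex
      rw [hc, producedAt_DD_one] at this
      exact patm_ne_qatm (this : _ = _)
    omega
  have := rank_eq_single DD (b := qatm w1 w2) h0 hex
    (by rw [hfp]; exact DD_tr_two) (by rfl)
  rw [this, applyAtom_q]
  show 1 + Chase.rank DD (qatm (π2 w1) (π2 w2)) = 2
  rw [π2_w1, π2_w2, rank_q_DD]

lemma depth_DD : depthAtMost DD 2 := by
  intro A hA
  obtain ⟨i, hAi⟩ : ∃ i, A ∈ DD.facts i := by
    simpa [allAtoms] using hA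
  have hG2 : A ∈ G2 := by
    rcases i with _|_|i
    · exact (show FS ⊆ G2 from fun x hx => Or.inl (Or.inl hx)) hAi
    · exact (show G1 ⊆ G2 from Set.subset_union_left) hAi
    · have hg : DD.facts (i+2) = G2 := faF_ge (i+2) (by omega)
      rw [hg] at hAi
      exact hAi
  rw [G2_eq] at hG2
  rcases hG2 with rfl|rfl|rfl
  · rw [rank_zero DD (by rw [DD.facts_zero]; rfl)]; omega
  · rw [rank_q_DD]; omega
  · rw [rank_p3_DD]

end Stmt18
/-- with `F = {p(a,b)}` and `𝓡 = {R1,R2,R3}`, no R-breadth-first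
R-chase derivation from `F` and `𝓡` is terminating, but there is a terminating
(non-breadth-first) R-chase derivation from `F` and `𝓡` of depth at most 2. -/
theorem restricted_breadth_first_matters :
    (∀ D : ChaseDerivation {ruleOne, ruleTwo, ruleThree} {patm (.const 0) (.const 1)},
      RChase D → BreadthFirst AppR D → ¬ Terminating AppR D) ∧
    (∃ D : ChaseDerivation {ruleOne, ruleTwo, ruleThree} {patm (.const 0) (.const 1)},
      RChase D ∧ Terminating AppR D ∧ depthAtMost D 2) := by
  constructor
  · intro D _ hBF
    exact Stmt18.part1 D hBF
  · exact ⟨Stmt18.DD, Stmt18.rchase_DD, Stmt18.term_DD, Stmt18.depth_DD⟩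
end
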